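/- Let X be an n-dimensional Banach space and let (x_j, x_j^*)_{j=1}^N be pairs in X × X* with x_j^*(x_j) = 1 for all j. Define the frame operator S : X → X by Sx = Σ_{j=1}^N x_j^*(x) x_j. Then the 2-summing norm of S satisfies π₂(S) ≥ N/√n. -/

import Mathlib

open scoped BigOperators

/-- The 2-summing norm of a continuous linear operator between real normed spaces. -/
noncomputable def pi2 {X Y : Type*} [NormedAddCommGroup X] [NormedSpace ℝ X]
    [NormedAddCommGroup Y] [NormedSpace ℝ Y] (T : X →L[ℝ] Y) : ℝ :=
  sSup { r : ℝ | ∃ (m : ℕ) (x : Fin m → X),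
    (∀ f : X →L[ℝ] ℝ, ∑ i, (f (x i)) ^ 2 ≤ ‖f‖ ^ 2) ∧
    r = Real.sqrt (∑ i, ‖T (x i)‖ ^ 2) }

/-!
Pietsch domination: separating, in `C(B_{X*}, ℝ)`, the open cone of negative functions from the
cone generated by `g ↦ π₂(S)² g(v)² - ‖S v‖²` gives a positive functional, i.e. a measure `μ` on
the dual unit ball, and hence a positive semidefinite form `B v w = ∫ g v * g w dμ` with
`‖S v‖² ≤ π₂(S)² B(v, v)` and `∑ B(yᵢ, yᵢ) ≤ 1` for every weakly 2-summing unit sequence `(yᵢ)`.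
In a `B`-orthonormal basis `(eᵢ)` (the `B`-null directions lie in `ker S`) we get
`N = tr S = ∑ B(S eᵢ, eᵢ)`, and `(S eᵢ / π₂(S))` is again a weakly 2-summing unit sequence,
so by Cauchy–Schwarz `N² ≤ n ∑ B(S eᵢ, S eᵢ) ≤ n π₂(S)²`.
-/

open Module

namespace LinearMap

lemma trace_eq_sum_of_apply_eq_sum_smul {R M ι : Type*} [CommRing R] [AddCommGroup M]
    [Module R M] [Module.Free R M] [Module.Finite R M] [Fintype ι] {T : M →ₗ[R] M} {x : ι → M}
    {f : ι → M →ₗ[R] R} (hT : ∀ v, T v = ∑ j, f j v • x j) :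
    trace R M T = ∑ j, f j (x j) := by
  have : T = ∑ j, (f j).smulRight (x j) := by ext v; simp [hT]
  simp [this, trace_smulRight]

section IsOrthoᵢ

variable {R M ι : Type*} [CommSemiring R] [AddCommMonoid M] [Module R M] [Fintype ι]
  {B : LinearMap.BilinForm R M} {v : ι → M}

lemma IsOrthoᵢ.sum_smul_apply (hv : B.IsOrthoᵢ v) (a : ι → R) (j : ι) :
    B (∑ i, a i • v i) (v j) = a j * B (v j) (v j) := by
  classical
  simp only [map_sum, map_smul, sum_apply, smul_apply, smul_eq_mul]
  exact Finset.sum_eq_single j (fun i _ hij => by rw [hv hij, mul_zero]) (by simp)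

lemma IsOrthoᵢ.sum_smul_apply_sum_smul (hv : B.IsOrthoᵢ v) (a : ι → R) :
    B (∑ i, a i • v i) (∑ i, a i • v i) = ∑ i, a i ^ 2 * B (v i) (v i) := by
  simp only [map_sum (B _), map_smul, smul_eq_mul, hv.sum_smul_apply, sq, mul_assoc]

end IsOrthoᵢ

variable {M ι : Type*} [AddCommGroup M] [Module ℝ M] {B : LinearMap.BilinForm ℝ M} {v : ι → M}

/-- Vectors with `B v v ≤ 0` are sent to `0`, as `√` and `⁻¹` vanish there. -/
noncomputable def BilinForm.normalize (B : LinearMap.BilinForm ℝ M) (v : ι → M) (i : ι) : M :=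
  (√(B (v i) (v i)))⁻¹ • v i

lemma BilinForm.normalize_apply_self_le_one (B : LinearMap.BilinForm ℝ M) (v : ι → M) (i : ι) :
    B (B.normalize v i) (B.normalize v i) ≤ 1 := by
  simp only [normalize, map_smul, smul_apply, smul_eq_mul, ← mul_assoc, ← sq, inv_pow]
  rcases le_or_gt (B (v i) (v i)) 0 with hd | hd
  · simp [Real.sqrt_eq_zero'.mpr hd]
  · rw [Real.sq_sqrt hd.le, inv_mul_cancel₀ hd.ne']

lemma IsOrthoᵢ.normalize (hv : B.IsOrthoᵢ v) : B.IsOrthoᵢ (B.normalize v) :=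
  fun i j hij => by
    change B (B.normalize v i) (B.normalize v j) = 0
    simp [BilinForm.normalize, hv hij]

lemma BilinForm.trace_eq_sum_apply_normalize [Fintype ι] [DecidableEq ι] (hB : ∀ x, 0 ≤ B x x)
    (b : Basis ι ℝ M) (hb : B.IsOrthoᵢ b) (T : M →ₗ[ℝ] M)
    (hT : ∀ i, B (b i) (b i) = 0 → T (b i) = 0) :
    trace ℝ M T = ∑ i, B (T (B.normalize b i)) (B.normalize b i) := by
  rw [trace_eq_matrix_trace ℝ b T, Matrix.trace]
  refine Finset.sum_congr rfl fun i _ => ?_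
  rw [Matrix.diag, LinearMap.toMatrix_apply]
  by_cases hd : B (b i) (b i) = 0
  · simp [normalize, hT i hd]
  have hrepr := hb.sum_smul_apply (b.repr (T (b i))) i
  rw [b.sum_repr] at hrepr
  have hsqrt : √(B (b i) (b i)) ^ 2 = B (b i) (b i) := Real.sq_sqrt (hB _)
  simp only [normalize, map_smul, smul_apply, smul_eq_mul, hrepr]
  field_simp
  rw [hsqrt, mul_div_cancel_right₀ _ hd]

end LinearMap

section WeakBound

variable {X : Type*} [NormedAddCommGroup X] [NormedSpace ℝ X]

lemma sum_sq_apply_smul {ι : Type*} [Fintype ι] (f : X →L[ℝ] ℝ) (a : ℝ) (y : ι → X) :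
    ∑ i, (f (a • y i)) ^ 2 = a ^ 2 * ∑ i, (f (y i)) ^ 2 := by
  simp only [map_smul, smul_eq_mul, mul_pow, Finset.mul_sum]

lemma sum_sq_apply_le_mul_norm_sq {ι : Type*} [Fintype ι] {y : ι → X} {σ : ℝ}
    (h : ∀ g : X →L[ℝ] ℝ, ‖g‖ ≤ 1 → ∑ i, (g (y i)) ^ 2 ≤ σ) (f : X →L[ℝ] ℝ) :
    ∑ i, (f (y i)) ^ 2 ≤ σ * ‖f‖ ^ 2 := by
  rcases eq_or_ne f 0 with rfl | hf
  · simp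
  have hnorm : 0 < ‖f‖ := norm_pos_iff.mpr hf
  have hg := h (‖f‖⁻¹ • f) (by rw [norm_smul, norm_inv, norm_norm, inv_mul_cancel₀ hnorm.ne'])
  simp only [smul_apply, smul_eq_mul, mul_pow, ← Finset.mul_sum] at hg
  rwa [inv_pow, inv_mul_le_iff₀ (by positivity), mul_comm] at hg

lemma sq_apply_le_norm_sq_mul (f : X →L[ℝ] ℝ) (v : X) : (f v) ^ 2 ≤ ‖f‖ ^ 2 * ‖v‖ ^ 2 := by
  rw [← mul_pow, ← sq_abs]
  exact pow_le_pow_left₀ (abs_nonneg _) (f.le_opNorm v) 2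

lemma exists_sum_sq_norm_le [FiniteDimensional ℝ X] :
    ∃ C, ∀ (m : ℕ) (y : Fin m → X), (∀ f : X →L[ℝ] ℝ, ∑ i, (f (y i)) ^ 2 ≤ ‖f‖ ^ 2) →
      ∑ i, ‖y i‖ ^ 2 ≤ C := by
  let E := EuclideanSpace ℝ (Fin (finrank ℝ X))
  let e : X ≃L[ℝ] E := .ofFinrankEq finrank_euclideanSpace_fin.symm
  let g (k : Fin (finrank ℝ X)) : X →L[ℝ] ℝ := (EuclideanSpace.proj k).comp (e : X →L[ℝ] E)
  let C := ‖(e.symm : E →L[ℝ] X)‖ ^ 2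
  have hnorm (v : X) : ‖v‖ ^ 2 ≤ C * ∑ k, (g k v) ^ 2 := by
    have hv : ‖v‖ ≤ ‖(e.symm : E →L[ℝ] X)‖ * ‖e v‖ := by
      simpa using (e.symm : E →L[ℝ] X).le_opNorm (e v)
    have he : ‖e v‖ ^ 2 = ∑ k, (g k v) ^ 2 := by
      simp [g, EuclideanSpace.norm_sq_eq (𝕜 := ℝ) (n := Fin (finrank ℝ X)) (e v)]
    rw [← he, ← mul_pow]
    exact pow_le_pow_left₀ (norm_nonneg v) hv 2
  refine ⟨C * ∑ k, ‖g k‖ ^ 2, fun m y hy => ?_⟩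
  calc ∑ i, ‖y i‖ ^ 2 ≤ ∑ i, C * ∑ k, (g k (y i)) ^ 2 := Finset.sum_le_sum fun i _ => hnorm (y i)
    _ = C * ∑ k, ∑ i, (g k (y i)) ^ 2 := by rw [← Finset.mul_sum, Finset.sum_comm]
    _ ≤ C * ∑ k, ‖g k‖ ^ 2 := by gcongr with k; exact hy (g k)

end WeakBound

section Pi2

variable {X Y : Type*} [NormedAddCommGroup X] [NormedSpace ℝ X]
  [NormedAddCommGroup Y] [NormedSpace ℝ Y]

lemma pi2_nonneg (T : X →L[ℝ] Y) : 0 ≤ pi2 T :=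
  Real.sSup_nonneg <| by rintro _ ⟨m, y, -, rfl⟩; exact Real.sqrt_nonneg _

lemma sum_sq_norm_le_pi2_sq [FiniteDimensional ℝ X] (T : X →L[ℝ] Y) {m : ℕ} {y : Fin m → X}
    (hy : ∀ f : X →L[ℝ] ℝ, ∑ i, (f (y i)) ^ 2 ≤ ‖f‖ ^ 2) :
    ∑ i, ‖T (y i)‖ ^ 2 ≤ pi2 T ^ 2 := by
  unfold pi2
  refine (Real.sqrt_le_iff.mp ?_).2
  refine le_csSup ?_ ⟨m, y, hy, rfl⟩
  obtain ⟨C, hC⟩ := exists_sum_sq_norm_le (X := X)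
  refine ⟨√(‖T‖ ^ 2 * C), ?_⟩
  rintro _ ⟨m, y, hy, rfl⟩
  refine Real.sqrt_le_sqrt ?_
  calc ∑ i, ‖T (y i)‖ ^ 2 ≤ ∑ i, ‖T‖ ^ 2 * ‖y i‖ ^ 2 := by
        gcongr with i; rw [← mul_pow]; gcongr; exact T.le_opNorm _
    _ ≤ ‖T‖ ^ 2 * C := by rw [← Finset.mul_sum]; gcongr; exact hC m y hy

lemma sum_sq_norm_le_pi2_sq_mul [FiniteDimensional ℝ X] (T : X →L[ℝ] Y) {m : ℕ} {y : Fin m → X}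
    {σ : ℝ} (hσ : 0 ≤ σ) (hy : ∀ f : X →L[ℝ] ℝ, ∑ i, (f (y i)) ^ 2 ≤ σ * ‖f‖ ^ 2) :
    ∑ i, ‖T (y i)‖ ^ 2 ≤ pi2 T ^ 2 * σ := by
  rcases hσ.eq_or_lt with rfl | hσ
  · have hy0 (i : Fin m) : y i = 0 :=
      SeparatingDual.eq_zero_of_forall_dual_eq_zero (R := ℝ) fun f => by
      have hsum : ∑ j, (f (y j)) ^ 2 = 0 :=
        le_antisymm (by simpa using hy f) (Finset.sum_nonneg fun j _ => sq_nonneg _)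
      simpa using (Finset.sum_eq_zero_iff_of_nonneg fun j _ => sq_nonneg _).mp hsum i
    simp [hy0]
  have hscaled := sum_sq_norm_le_pi2_sq T (y := fun i => (√σ)⁻¹ • y i) fun f => by
    rw [sum_sq_apply_smul, inv_pow, Real.sq_sqrt hσ.le, inv_mul_le_iff₀ hσ]
    exact hy f
  simp only [map_smul, norm_smul, mul_pow, norm_inv, Real.norm_of_nonneg (Real.sqrt_nonneg σ),
    inv_pow, Real.sq_sqrt hσ.le, ← Finset.mul_sum, inv_mul_le_iff₀ hσ] at hscaled
  linarith

end Pi2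

theorem ContinuousMap.exists_positive_functional_nonneg_on_cone {K : Type*} [TopologicalSpace K]
    [CompactSpace K] {D : Set C(K, ℝ)} (hD : Convex ℝ D) (hD0 : 0 ∈ D)
    (hsmul : ∀ ψ ∈ D, ∀ t : ℝ, 0 ≤ t → t • ψ ∈ D) (hmax : ∀ ψ ∈ D, ∃ k, 0 ≤ ψ k) :
    ∃ φ : C(K, ℝ) →L[ℝ] ℝ, 0 < φ 1 ∧ (∀ ψ, 0 ≤ ψ → 0 ≤ φ ψ) ∧ ∀ ψ ∈ D, 0 ≤ φ ψ := by
  let N : Set C(K, ℝ) := {ψ | ∀ k, ψ k < 0}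
  have hNopen : IsOpen N := by
    simpa [Set.MapsTo] using
      ContinuousMap.isOpen_setOfPred_mapsTo isCompact_univ (isOpen_Iio (a := (0 : ℝ)))
  have hNconv : Convex ℝ N := by
    intro ψ₁ h₁ ψ₂ h₂ a b ha hb hab k
    simp only [add_apply, smul_apply, smul_eq_mul]
    rcases ha.eq_or_lt with rfl | ha
    · obtain rfl : b = 1 := by simpa using hab
      simpa using h₂ k
    · nlinarith [h₁ k, h₂ k]
  have hdisj : Disjoint N D := Set.disjoint_left.mpr fun ψ hψ hψD => by
    obtain ⟨k, hk⟩ := hmax ψ hψD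
    exact (hψ k).not_ge hk
  obtain ⟨φ, u, hφN, hφD⟩ := geometric_hahn_banach_open hNconv hNopen hD hdisj
  have hu : u ≤ 0 := by simpa using hφD 0 hD0
  have hφN' (ψ) (hψ : ψ ∈ N) : φ ψ < 0 := (hφN ψ hψ).trans_le hu
  have hφ1 : 0 < φ 1 := by simpa using hφN' (-1) fun k => by simp
  refine ⟨φ, hφ1, fun ψ hψ => ?_, fun ψ hψ => ?_⟩
  · refine le_of_forall_pos_lt_add fun ε hε => ?_
    have hneg := hφN' (-ψ - (ε / φ 1) • 1) fun k => by
      have := ContinuousMap.le_def.mp hψ k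
      simp only [sub_apply, neg_apply, smul_apply, one_apply, smul_eq_mul, mul_one,
        zero_apply] at this ⊢
      linarith [div_pos hε hφ1]
    rw [map_sub, map_neg, map_smul, smul_eq_mul, div_mul_cancel₀ _ hφ1.ne'] at hneg
    linarith
  · by_contra! hneg
    have := hφD _ (hsmul ψ hψ ((u - 1) / φ ψ) (div_nonneg_of_nonpos (by linarith) hneg.le))
    rw [map_smul, smul_eq_mul, div_mul_cancel₀ _ hneg.ne] at this
    linarith

section Pietsch

variable {X Y : Type*} [NormedAddCommGroup X] [NormedSpace ℝ X]
  [NormedAddCommGroup Y] [NormedSpace ℝ Y]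

variable (X) in
abbrev DualBall : Type _ := Metric.closedBall (0 : X →L[ℝ] ℝ) 1

noncomputable def dualBallMul : X →ₗ[ℝ] X →ₗ[ℝ] C(DualBall X, ℝ) :=
  LinearMap.mk₂ ℝ (fun v w => ⟨fun g => (g : X →L[ℝ] ℝ) v * (g : X →L[ℝ] ℝ) w, by fun_prop⟩)
    (fun v₁ v₂ w => by ext; simp [add_mul]) (fun a v w => by ext; simp [mul_assoc])
    (fun v w₁ w₂ => by ext; simp [mul_add]) (fun a v w => by ext; simp [mul_left_comm])

@[simp]
lemma dualBallMul_apply (v w : X) (g : DualBall X) :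
    dualBallMul v w g = (g : X →L[ℝ] ℝ) v * (g : X →L[ℝ] ℝ) w := rfl


noncomputable def pietschFun (T : X →L[ℝ] Y) (c : ℝ) (v : X) : C(DualBall X, ℝ) :=
  c • dualBallMul v v - ‖T v‖ ^ 2 • 1

lemma pietschFun_smul (T : X →L[ℝ] Y) (c t : ℝ) (v : X) :
    pietschFun T c (t • v) = t ^ 2 • pietschFun T c v := by
  ext g
  simp only [pietschFun, map_smul, LinearMap.smul_apply, norm_smul, Real.norm_eq_abs,
    ContinuousMap.sub_apply, ContinuousMap.smul_apply, dualBallMul_apply, smul_eq_mul,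
    ContinuousMap.one_apply, mul_pow, sq_abs]
  ring

def pietschCone (T : X →L[ℝ] Y) (c : ℝ) : Set C(DualBall X, ℝ) :=
  {ψ | ∃ (m : ℕ) (y : Fin m → X), ψ = ∑ i, pietschFun T c (y i)}

variable {T : X →L[ℝ] Y} {c : ℝ}

lemma zero_mem_pietschCone : 0 ∈ pietschCone T c := ⟨0, finZeroElim, by simp⟩

lemma smul_mem_pietschCone {ψ : C(DualBall X, ℝ)} {t : ℝ} (ht : 0 ≤ t)
    (hψ : ψ ∈ pietschCone T c) : t • ψ ∈ pietschCone T c := by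
  obtain ⟨m, y, rfl⟩ := hψ
  refine ⟨m, fun i => √t • y i, ?_⟩
  simp only [pietschFun_smul, Real.sq_sqrt ht, Finset.smul_sum]

lemma add_mem_pietschCone {ψ₁ ψ₂ : C(DualBall X, ℝ)} (h₁ : ψ₁ ∈ pietschCone T c)
    (h₂ : ψ₂ ∈ pietschCone T c) : ψ₁ + ψ₂ ∈ pietschCone T c := by
  obtain ⟨m₁, y₁, rfl⟩ := h₁
  obtain ⟨m₂, y₂, rfl⟩ := h₂
  exact ⟨m₁ + m₂, Fin.append y₁ y₂, by simp [Fin.sum_univ_add]⟩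

lemma convex_pietschCone : Convex ℝ (pietschCone T c) :=
  fun _ h₁ _ h₂ _ _ ha hb _ =>
    add_mem_pietschCone (smul_mem_pietschCone ha h₁) (smul_mem_pietschCone hb h₂)

lemma exists_nonneg_of_mem_pietschCone [FiniteDimensional ℝ X] {ψ : C(DualBall X, ℝ)}
    (hψ : ψ ∈ pietschCone T (pi2 T ^ 2)) : ∃ g, 0 ≤ ψ g := by
  obtain ⟨m, y, rfl⟩ := hψ
  let q : C(DualBall X, ℝ) := ∑ i, dualBallMul (y i) (y i)
  have : Nonempty (DualBall X) := ⟨⟨0, Metric.mem_closedBall_self zero_le_one⟩⟩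
  obtain ⟨g₀, -, hg₀⟩ := isCompact_univ.exists_isMaxOn Set.univ_nonempty q.continuous.continuousOn
  have hq0 : 0 ≤ q g₀ := by
    simpa [q] using Finset.sum_nonneg fun i _ => mul_self_nonneg ((g₀ : X →L[ℝ] ℝ) (y i))
  have hbound (f : X →L[ℝ] ℝ) : ∑ i, (f (y i)) ^ 2 ≤ q g₀ * ‖f‖ ^ 2 :=
    sum_sq_apply_le_mul_norm_sq (fun g hg => by
      simpa [q, sq] using hg₀ (Set.mem_univ ⟨g, mem_closedBall_zero_iff.mpr hg⟩)) f
  refine ⟨g₀, ?_⟩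
  have := sum_sq_norm_le_pi2_sq_mul T hq0 hbound
  simp only [q, ContinuousMap.sum_apply, dualBallMul_apply] at this
  simp only [pietschFun, ContinuousMap.sum_apply, ContinuousMap.sub_apply,
    ContinuousMap.smul_apply, dualBallMul_apply, ContinuousMap.one_apply, smul_eq_mul, mul_one,
    Finset.sum_sub_distrib, ← Finset.mul_sum]
  linarith

theorem exists_pietsch_form [FiniteDimensional ℝ X] (T : X →L[ℝ] Y) :
    ∃ B : LinearMap.BilinForm ℝ X, LinearMap.IsSymm B ∧ (∀ v, 0 ≤ B v v) ∧
      (∀ v, ‖T v‖ ^ 2 ≤ pi2 T ^ 2 * B v v) ∧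
      ∀ (m : ℕ) (y : Fin m → X) (σ : ℝ), 0 ≤ σ →
        (∀ f : X →L[ℝ] ℝ, ∑ i, (f (y i)) ^ 2 ≤ σ * ‖f‖ ^ 2) → ∑ i, B (y i) (y i) ≤ σ := by
  obtain ⟨φ, hφ1, hφpos, hφD⟩ := ContinuousMap.exists_positive_functional_nonneg_on_cone
    convex_pietschCone zero_mem_pietschCone (fun _ hψ _ ht => smul_mem_pietschCone ht hψ)
    fun _ hψ => exists_nonneg_of_mem_pietschCone (T := T) hψ
  refine ⟨dualBallMul.compr₂ ((φ 1)⁻¹ • (φ : C(DualBall X, ℝ) →ₗ[ℝ] ℝ)), ⟨fun v w => ?_⟩,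
    fun v => ?_, fun v => ?_, fun m y σ hσ hy => ?_⟩
  · have hcomm : dualBallMul v w = dualBallMul w v := by ext; simp [mul_comm]
    simp [hcomm]
  · simp only [LinearMap.compr₂_apply, LinearMap.smul_apply, ContinuousLinearMap.coe_coe,
      smul_eq_mul]
    refine mul_nonneg (inv_nonneg.mpr hφ1.le) (hφpos _ (ContinuousMap.le_def.mpr fun g => ?_))
    simpa using mul_self_nonneg ((g : X →L[ℝ] ℝ) v)
  · have := hφD (pietschFun T (pi2 T ^ 2) v) ⟨1, fun _ => v, by simp⟩
    simp only [pietschFun, map_sub, map_smul, smul_eq_mul, sub_nonneg] at this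
    simp only [LinearMap.compr₂_apply, LinearMap.smul_apply, ContinuousLinearMap.coe_coe,
      smul_eq_mul]
    rw [← mul_assoc, mul_comm _ (φ 1)⁻¹, mul_assoc, le_inv_mul_iff₀ hφ1, mul_comm]
    exact this
  · have hpos := hφpos (σ • 1 - ∑ i, dualBallMul (y i) (y i)) <|
      ContinuousMap.le_def.mpr fun g => by
      have hg := hy g
      have hg1 : ‖(g : X →L[ℝ] ℝ)‖ ^ 2 ≤ 1 :=
        pow_le_one₀ (norm_nonneg _) (mem_closedBall_zero_iff.mp g.2)
      simp only [ContinuousMap.zero_apply, ContinuousMap.sub_apply, ContinuousMap.smul_apply,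
        ContinuousMap.one_apply, ContinuousMap.sum_apply, dualBallMul_apply, smul_eq_mul, mul_one,
        sub_nonneg, ← sq]
      nlinarith
    simp only [map_sub, map_smul, map_sum, smul_eq_mul, sub_nonneg] at hpos
    simp only [LinearMap.compr₂_apply, LinearMap.smul_apply, ContinuousLinearMap.coe_coe,
      smul_eq_mul, ← Finset.mul_sum]
    rwa [inv_mul_le_iff₀ hφ1, mul_comm]

end Pietsch

section TraceBound

variable {X Y : Type*} [NormedAddCommGroup X] [NormedSpace ℝ X]
  [NormedAddCommGroup Y] [NormedSpace ℝ Y]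

lemma sum_sq_apply_le_of_isOrthoᵢ {ι : Type*} [Fintype ι] (T : X →L[ℝ] Y)
    {B : LinearMap.BilinForm ℝ X} {e : ι → X} (he : B.IsOrthoᵢ e) (he₁ : ∀ i, B (e i) (e i) ≤ 1)
    {c : ℝ} (hc : 0 ≤ c) (hdom : ∀ v, ‖T v‖ ^ 2 ≤ c * B v v) (f : Y →L[ℝ] ℝ) :
    ∑ i, (f (T (e i))) ^ 2 ≤ c * ‖f‖ ^ 2 := by
  set a : ι → ℝ := fun i => f (T (e i))
  set A := ∑ i, a i ^ 2
  set W := ∑ i, a i • e i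
  have hfTW : f (T W) = A := by simp [W, A, a, sq]
  have hBW : B W W ≤ A :=
    he.sum_smul_apply_sum_smul a ▸ Finset.sum_le_sum fun i _ =>
      mul_le_of_le_one_right (sq_nonneg _) (he₁ i)
  have hA : A ^ 2 ≤ c * ‖f‖ ^ 2 * A := calc
    A ^ 2 = (f (T W)) ^ 2 := by rw [hfTW]
    _ ≤ ‖f‖ ^ 2 * ‖T W‖ ^ 2 := sq_apply_le_norm_sq_mul f (T W)
    _ ≤ ‖f‖ ^ 2 * (c * A) := by gcongr; exact (hdom W).trans (by gcongr)
    _ = c * ‖f‖ ^ 2 * A := by ring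
  have hA₀ : 0 ≤ A := Finset.sum_nonneg fun i _ => sq_nonneg _
  nlinarith [mul_nonneg hc (sq_nonneg ‖f‖)]

theorem sq_trace_le_finrank_mul [FiniteDimensional ℝ X] (T : X →L[ℝ] X)
    {B : LinearMap.BilinForm ℝ X} (hB : LinearMap.IsSymm B) (hpsd : ∀ v, 0 ≤ B v v)
    {c : ℝ} (hc : 0 ≤ c)
    (hdom : ∀ v, ‖T v‖ ^ 2 ≤ c * B v v)
    (hsum : ∀ y : Fin (finrank ℝ X) → X,
      (∀ f : X →L[ℝ] ℝ, ∑ i, (f (y i)) ^ 2 ≤ c * ‖f‖ ^ 2) → ∑ i, B (y i) (y i) ≤ c) :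
    LinearMap.trace ℝ X T ^ 2 ≤ finrank ℝ X * c := by
  have : Invertible (2 : ℝ) := invertibleOfNonzero two_ne_zero
  obtain ⟨b, hb⟩ := LinearMap.BilinForm.exists_orthogonal_basis hB
  set e := B.normalize b
  have hnull (i) (hi : B (b i) (b i) = 0) : T (b i) = 0 :=
    norm_eq_zero.mp <| pow_eq_zero_iff two_ne_zero |>.mp <|
      le_antisymm (by simpa [hi] using hdom (b i)) (sq_nonneg _)
  have he₁ := B.normalize_apply_self_le_one b
  calc LinearMap.trace ℝ X T ^ 2 = (∑ i, B (T (e i)) (e i)) ^ 2 := by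
        rw [B.trace_eq_sum_apply_normalize hpsd b hb T hnull]; rfl
    _ ≤ finrank ℝ X * ∑ i, B (T (e i)) (e i) ^ 2 := by
        simpa using
          sq_sum_le_card_mul_sum_sq (s := Finset.univ) (f := fun i => B (T (e i)) (e i))
    _ ≤ finrank ℝ X * ∑ i, B (T (e i)) (T (e i)) := by
        gcongr with i
        exact (B.apply_sq_le_of_symm hpsd hB _ _).trans
          (mul_le_of_le_one_right (hpsd _) (he₁ i))
    _ ≤ finrank ℝ X * c := by
        gcongr
        exact hsum _ (sum_sq_apply_le_of_isOrthoᵢ T hb.normalize he₁ hc hdom)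

end TraceBound

theorem frame_potential_lower_bound
    {X : Type*} [NormedAddCommGroup X] [NormedSpace ℝ X] [FiniteDimensional ℝ X]
    (n N : ℕ) (hn : Module.finrank ℝ X = n)
    (x : Fin N → X) (f : Fin N → X →L[ℝ] ℝ)
    (hpair : ∀ j, f j (x j) = 1)
    (S : X →L[ℝ] X) (hS : ∀ v, S v = ∑ j, f j v • x j) :
    (N : ℝ) / Real.sqrt n ≤ pi2 S := by
  subst hn
  have htrace : LinearMap.trace ℝ X S = N := by
    rw [LinearMap.trace_eq_sum_of_apply_eq_sum_smul (f := fun j => (f j : X →ₗ[ℝ] ℝ)) hS]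
    simp [hpair]
  obtain ⟨B, hB, hpsd, hdom, hsum⟩ := exists_pietsch_form S
  have hsq := sq_trace_le_finrank_mul S hB hpsd (sq_nonneg _) hdom
    fun y => hsum _ y _ (sq_nonneg _)
  rw [htrace] at hsq
  have hN : (N : ℝ) ≤ pi2 S * √(finrank ℝ X) := by
    rw [← pow_le_pow_iff_left₀ (Nat.cast_nonneg N)
      (mul_nonneg (pi2_nonneg S) (Real.sqrt_nonneg _)) two_ne_zero, mul_pow,
      Real.sq_sqrt (Nat.cast_nonneg _), mul_comm]
    exact hsq
  exact div_le_of_le_mul₀ (Real.sqrt_nonneg _) (pi2_nonneg S) hN
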